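/- With a_{k_1,k_2} = tr(A_{k_1}A_{k_2}) and b_k as defined, the following closed-form identity holds for all g ≥ 1 and k ≥ 0: (24^g·g!/(6g-1)!!)·Σ_{l=0}^{k+1} a_{l-1, 3g-l} equals ((6g-3-2k)!!/(6g-1)!!) times: (6j-1)!!·(g-1)!/(j!(g-j)!)·(g-2j) if k = 3j-1; -2·(6j+1)!!·(g-1)!/(j!(g-1-j)!) if k = 3j; 2·(6j+3)!!·(g-1)!/(j!(g-1-j)!) if k = 3j+1. -/

import Mathlib

/-- The sequence b_k (k ≥ -1) from the paper:
b_{3g} = -(6g-1)!!/(24^g g!), b_{3g-1} = ((6g+1)/(6g-1))·(6g-1)!!/(24^g g!),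
b_{3g-2} = (1/2)·(6g-5)!!/(24^{g-1} (g-1)!), with (-1)!! = 1. -/
def bInt (k : ℤ) : ℚ :=
  if k % 3 = 0 then
    -((6 * (k / 3) - 1).toNat.doubleFactorial : ℚ)
      / (24 ^ (k / 3).toNat * ((k / 3).toNat.factorial : ℚ))
  else if k % 3 = 2 then
    ((6 * (((k + 1) / 3 : ℤ) : ℚ) + 1) / (6 * (((k + 1) / 3 : ℤ) : ℚ) - 1)) *
      (((6 * ((k + 1) / 3) - 1).toNat.doubleFactorial : ℚ)
        / (24 ^ ((k + 1) / 3).toNat * (((k + 1) / 3).toNat.factorial : ℚ)))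
  else
    (1 / 2 : ℚ) * (((6 * ((k + 2) / 3) - 5).toNat.doubleFactorial : ℚ)
      / (24 ^ ((k + 2) / 3 - 1).toNat * (((k + 2) / 3 - 1).toNat.factorial : ℚ)))

/-- The matrices A_k (k ≥ -1): A_{3g} = b_{3g}·μ1, A_{3g-1} = b_{3g-1}·μ2,
A_{3g-2} = -b_{3g-2}·μ3, where μ1 = [[0,1],[0,0]], μ2 = [[0,0],[1,0]],
μ3 = [[1,0],[0,-1]]. -/
def Aint (k : ℤ) : Matrix (Fin 2) (Fin 2) ℚ :=
  if k % 3 = 0 then bInt k • !![0, 1; 0, 0]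
  else if k % 3 = 2 then bInt k • !![0, 0; 1, 0]
  else (-(bInt k)) • !![1, 0; 0, -1]

/-- a_{k_1,k_2} = tr(A_{k_1}A_{k_2}), with the convention a = 0 if some index < -1. -/
def aPair (k1 k2 : ℤ) : ℚ :=
  if k1 < -1 ∨ k2 < -1 then 0 else Matrix.trace (Aint k1 * Aint k2)

/-- The left-hand side (24^g·g!/(6g-1)!!)·Σ_{l=0}^{k+1} a_{l-1,3g-l}. -/
def lhs16 (g k : ℕ) : ℚ :=
  (24 ^ g * (g.factorial : ℚ) / ((6 * g - 1).doubleFactorial : ℚ)) *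
    ∑ l ∈ Finset.range (k + 2), aPair ((l : ℤ) - 1) (3 * (g : ℤ) - (l : ℤ))

/-! Put β m = (6m-1)!!/(24^m m!) (truncated subtraction gives (6·0-1)!! = 0!! = 1, as wanted). Then b_{-1} = -1, b_{3m} = -β m, b_{3m+1} = (6m+1)/2 · β m and
b_{3m+2} = (6m+7)/(6m+5) · β (m+1), and since tr(μ₁μ₂) = 1, tr(μ₃μ₃) = 2 while every other product
met in the sum is traceless, each term a_{l-1,3g-l} is a product of two β's. The partial sums
S_n = Σ_{l<n} a_{l-1,3g-l} are, with g = j + d in the first line and g = j + d + 1 in the others,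
  g · S_{3j+1} = β j β d (d - j),
  g · S_{3j+2} = -(6j+1)(6d+1)(6d+3)/12 · β j β d,
  g · S_{3j+3} = (6j+1)(6j+3)(6d+1)/12 · β j β d,
which follows by induction on j from β (m+1) / β m = (6m+1)(6m+3)(6m+5)/(24(m+1)).
The prefactor of the left-hand side is 1/β g, and the claimed right-hand sides are these closed
forms written out in double factorials. -/

open Finset

def β (m : ℕ) : ℚ := (6 * m - 1).doubleFactorial / (24 ^ m * m.factorial)

lemma β_pos (m : ℕ) : 0 < β m := by
  unfold β; positivity

lemma doubleFactorial_six_mul_sub_one (m : ℕ) :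
    ((6 * m - 1).doubleFactorial : ℚ) = 24 ^ m * m.factorial * β m := by
  unfold β; field_simp

lemma doubleFactorial_six_mul_add_one (m : ℕ) :
    (6 * m + 1).doubleFactorial = (6 * m + 1) * (6 * m - 1).doubleFactorial := by
  rcases m with _ | m
  · rfl
  · rw [show 6 * (m + 1) + 1 = 6 * m + 5 + 2 by ring, Nat.doubleFactorial_add_two]
    rfl

lemma doubleFactorial_six_mul_add_three (m : ℕ) :
    (6 * m + 3).doubleFactorial = (6 * m + 3) * (6 * m + 1) * (6 * m - 1).doubleFactorial := by
  rw [Nat.doubleFactorial_add_two, doubleFactorial_six_mul_add_one, mul_assoc]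

lemma β_succ (m : ℕ) :
    β (m + 1) = (6 * m + 1) * (6 * m + 3) * (6 * m + 5) / (24 * (m + 1)) * β m := by
  unfold β
  rw [show 6 * (m + 1) - 1 = 6 * m + 3 + 2 by omega, Nat.doubleFactorial_add_two,
    doubleFactorial_six_mul_add_three, Nat.factorial_succ]
  push_cast
  field_simp
  ring

lemma bInt_three_mul (m : ℕ) : bInt (3 * m) = -β m := by
  have hq : (3 * (m : ℤ)) / 3 = m := by omega
  rw [bInt, if_pos (by omega), hq, show (6 * (m : ℤ) - 1).toNat = 6 * m - 1 by omega,
    Int.toNat_natCast, β, neg_div]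

lemma bInt_three_mul_add_one (m : ℕ) : bInt (3 * m + 1) = (6 * m + 1) / 2 * β m := by
  rw [bInt, if_neg (by omega), if_neg (by omega), show (3 * (m : ℤ) + 1 + 2) / 3 = m + 1 by omega,
    show (6 * ((m : ℤ) + 1) - 5).toNat = 6 * m + 1 by omega,
    show ((m : ℤ) + 1 - 1).toNat = m by omega, doubleFactorial_six_mul_add_one, β]
  push_cast
  ring

lemma bInt_three_mul_add_two (m : ℕ) :
    bInt (3 * m + 2) = (6 * m + 7) / (6 * m + 5) * β (m + 1) := by
  rw [bInt, if_neg (by omega), if_pos (by omega), show (3 * (m : ℤ) + 2 + 1) / 3 = m + 1 by omega,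
    show (6 * ((m : ℤ) + 1) - 1).toNat = 6 * (m + 1) - 1 by omega,
    show ((m : ℤ) + 1).toNat = m + 1 by omega, β]
  push_cast
  ring

lemma bInt_neg_one : bInt (-1) = -1 := by
  rw [bInt, if_neg (by decide), if_pos (by decide)]
  norm_num
  rfl

lemma aPair_of_emod_eq_zero_two {k₁ k₂ : ℤ} (h₁ : -1 ≤ k₁) (h₂ : -1 ≤ k₂)
    (r₁ : k₁ % 3 = 0) (r₂ : k₂ % 3 = 2) : aPair k₁ k₂ = bInt k₁ * bInt k₂ := by
  rw [aPair, if_neg (by omega), Aint, Aint, if_pos r₁, if_neg (by omega), if_pos r₂]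
  simp [Matrix.trace_fin_two]

lemma aPair_of_emod_eq_two_zero {k₁ k₂ : ℤ} (h₁ : -1 ≤ k₁) (h₂ : -1 ≤ k₂)
    (r₁ : k₁ % 3 = 2) (r₂ : k₂ % 3 = 0) : aPair k₁ k₂ = bInt k₁ * bInt k₂ := by
  rw [aPair, if_neg (by omega), Aint, Aint, if_neg (by omega), if_pos r₁, if_pos r₂]
  simp [Matrix.trace_fin_two]

lemma aPair_of_emod_eq_one_one {k₁ k₂ : ℤ} (h₁ : -1 ≤ k₁) (h₂ : -1 ≤ k₂)
    (r₁ : k₁ % 3 = 1) (r₂ : k₂ % 3 = 1) : aPair k₁ k₂ = 2 * (bInt k₁ * bInt k₂) := by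
  rw [aPair, if_neg (by omega), Aint, Aint, if_neg (by omega), if_neg (by omega),
    if_neg (by omega), if_neg (by omega)]
  simp [Matrix.trace_fin_two, two_mul]

def partialSum (g n : ℕ) : ℚ :=
  ∑ l ∈ range n, aPair ((l : ℤ) - 1) (3 * (g : ℤ) - (l : ℤ))

lemma lhs16_eq_partialSum_div (g k : ℕ) : lhs16 g k = partialSum g (k + 2) / β g := by
  have hβ := (β_pos g).ne'
  rw [lhs16, partialSum, doubleFactorial_six_mul_sub_one]
  field_simp

lemma partialSum_one (g : ℕ) : partialSum g 1 = β g := by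
  rw [partialSum, sum_range_one, Nat.cast_zero, zero_sub, sub_zero,
    aPair_of_emod_eq_two_zero le_rfl (by omega) (by decide) (by omega), bInt_neg_one,
    bInt_three_mul]
  ring

lemma partialSum_three_mul_add_two (j d : ℕ) :
    partialSum (j + d + 1) (3 * j + 2)
      = partialSum (j + d + 1) (3 * j + 1) + bInt (3 * j) * bInt (3 * d + 2) := by
  rw [partialSum, partialSum, sum_range_succ,
    aPair_of_emod_eq_zero_two (by omega) (by omega) (by omega) (by omega)]
  congr 3 <;> push_cast <;> ring

lemma partialSum_three_mul_add_three (j d : ℕ) :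
    partialSum (j + d + 1) (3 * j + 3)
      = partialSum (j + d + 1) (3 * j + 2) + 2 * (bInt (3 * j + 1) * bInt (3 * d + 1)) := by
  rw [partialSum, partialSum, sum_range_succ,
    aPair_of_emod_eq_one_one (by omega) (by omega) (by omega) (by omega)]
  congr 4 <;> push_cast <;> ring

lemma partialSum_three_mul_add_four (j d : ℕ) :
    partialSum (j + d + 1) (3 * j + 4)
      = partialSum (j + d + 1) (3 * j + 3) + bInt (3 * j + 2) * bInt (3 * d) := by
  rw [partialSum, partialSum, sum_range_succ,
    aPair_of_emod_eq_two_zero (by omega) (by omega) (by omega) (by omega)]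
  congr 3 <;> push_cast <;> ring

section ClosedForms

variable {j d : ℕ}

lemma mul_partialSum_add_two_of_add_one
    (h : ((j : ℚ) + d + 1) * partialSum (j + d + 1) (3 * j + 1)
      = β j * β (d + 1) * (d + 1 - j)) :
    ((j : ℚ) + d + 1) * partialSum (j + d + 1) (3 * j + 2)
      = -((6 * j + 1) * (6 * d + 1) * (6 * d + 3) / 12 * β j * β d) := by
  rw [partialSum_three_mul_add_two, mul_add, h, bInt_three_mul,
    bInt_three_mul_add_two, β_succ]
  field_simp
  ring

lemma mul_partialSum_add_three_of_add_two
    (h : ((j : ℚ) + d + 1) * partialSum (j + d + 1) (3 * j + 2)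
      = -((6 * j + 1) * (6 * d + 1) * (6 * d + 3) / 12 * β j * β d)) :
    ((j : ℚ) + d + 1) * partialSum (j + d + 1) (3 * j + 3)
      = (6 * j + 1) * (6 * j + 3) * (6 * d + 1) / 12 * β j * β d := by
  rw [partialSum_three_mul_add_three, mul_add, h, bInt_three_mul_add_one, bInt_three_mul_add_one]
  ring

lemma mul_partialSum_add_four_of_add_three
    (h : ((j : ℚ) + d + 1) * partialSum (j + d + 1) (3 * j + 3)
      = (6 * j + 1) * (6 * j + 3) * (6 * d + 1) / 12 * β j * β d) :
    ((j : ℚ) + d + 1) * partialSum (j + d + 1) (3 * j + 4)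
      = β (j + 1) * β d * (d - (j + 1)) := by
  rw [partialSum_three_mul_add_four, mul_add, h, bInt_three_mul_add_two, bInt_three_mul, β_succ]
  field_simp
  ring

end ClosedForms

theorem mul_partialSum_three_mul_add_one (j d : ℕ) :
    ((j : ℚ) + d) * partialSum (j + d) (3 * j + 1) = β j * β d * (d - j) := by
  induction j generalizing d with
  | zero => simp [partialSum_one, show β 0 = 1 by simp [β], mul_comm]
  | succ j ih =>
    have h := mul_partialSum_add_four_of_add_three <| mul_partialSum_add_three_of_add_two <|
      mul_partialSum_add_two_of_add_one (by simpa [add_assoc] using ih (d + 1))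
    rw [show j + 1 + d = j + d + 1 by ring]
    push_cast
    linear_combination h

theorem mul_partialSum_three_mul_add_two (j d : ℕ) :
    ((j : ℚ) + d + 1) * partialSum (j + d + 1) (3 * j + 2)
      = -((6 * j + 1) * (6 * d + 1) * (6 * d + 3) / 12 * β j * β d) :=
  mul_partialSum_add_two_of_add_one <| by
    simpa [add_assoc] using mul_partialSum_three_mul_add_one j (d + 1)

theorem mul_partialSum_three_mul_add_three (j d : ℕ) :
    ((j : ℚ) + d + 1) * partialSum (j + d + 1) (3 * j + 3)
      = (6 * j + 1) * (6 * j + 3) * (6 * d + 1) / 12 * β j * β d :=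
  mul_partialSum_add_three_of_add_two (mul_partialSum_three_mul_add_two j d)

lemma lhs16_three_mul_sub_one {g j : ℕ} (hj : 1 ≤ j) (hjg : j ≤ g) :
    lhs16 g (3 * j - 1)
      = (((6 * g - 3 - 2 * (3 * j - 1)).doubleFactorial : ℚ)
          / ((6 * g - 1).doubleFactorial : ℚ)) *
        (((6 * j - 1).doubleFactorial : ℚ) * ((g - 1).factorial : ℚ)
            / ((j.factorial : ℚ) * ((g - j).factorial : ℚ)) * ((g : ℚ) - 2 * j)) := by
  obtain ⟨d, rfl⟩ := Nat.exists_eq_add_of_le hjg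
  have hfac := Nat.mul_factorial_pred (show j + d ≠ 0 by omega)
  have hβ := (β_pos (j + d)).ne'
  rw [lhs16_eq_partialSum_div, show 3 * j - 1 + 2 = 3 * j + 1 by omega,
    show 6 * (j + d) - 3 - 2 * (3 * j - 1) = 6 * d - 1 by omega, show j + d - j = d by omega,
    doubleFactorial_six_mul_sub_one, doubleFactorial_six_mul_sub_one,
    doubleFactorial_six_mul_sub_one, ← hfac]
  push_cast
  rw [pow_add]
  field_simp
  linear_combination mul_partialSum_three_mul_add_one j d

lemma lhs16_three_mul {g j : ℕ} (hjg : j + 1 ≤ g) :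
    lhs16 g (3 * j)
      = (((6 * g - 3 - 2 * (3 * j)).doubleFactorial : ℚ)
          / ((6 * g - 1).doubleFactorial : ℚ)) *
        (-2 * ((6 * j + 1).doubleFactorial : ℚ) * ((g - 1).factorial : ℚ)
            / ((j.factorial : ℚ) * ((g - 1 - j).factorial : ℚ))) := by
  obtain ⟨d, rfl⟩ : ∃ d, g = j + d + 1 := ⟨g - j - 1, by omega⟩
  have hβ := (β_pos (j + d + 1)).ne'
  rw [lhs16_eq_partialSum_div, show 6 * (j + d + 1) - 3 - 2 * (3 * j) = 6 * d + 3 by omega,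
    show j + d + 1 - 1 - j = d by omega, Nat.add_sub_cancel, doubleFactorial_six_mul_add_three,
    doubleFactorial_six_mul_add_one]
  simp only [Nat.cast_mul, doubleFactorial_six_mul_sub_one, Nat.factorial_succ, pow_add]
  push_cast
  field_simp
  linear_combination 24 * mul_partialSum_three_mul_add_two j d

lemma lhs16_three_mul_add_one {g j : ℕ} (hjg : j + 1 ≤ g) :
    lhs16 g (3 * j + 1)
      = (((6 * g - 3 - 2 * (3 * j + 1)).doubleFactorial : ℚ)
          / ((6 * g - 1).doubleFactorial : ℚ)) *
        (2 * ((6 * j + 3).doubleFactorial : ℚ) * ((g - 1).factorial : ℚ)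
            / ((j.factorial : ℚ) * ((g - 1 - j).factorial : ℚ))) := by
  obtain ⟨d, rfl⟩ : ∃ d, g = j + d + 1 := ⟨g - j - 1, by omega⟩
  have hβ := (β_pos (j + d + 1)).ne'
  rw [lhs16_eq_partialSum_div, show 3 * j + 1 + 2 = 3 * j + 3 by omega,
    show 6 * (j + d + 1) - 3 - 2 * (3 * j + 1) = 6 * d + 1 by omega,
    show j + d + 1 - 1 - j = d by omega, Nat.add_sub_cancel, doubleFactorial_six_mul_add_three,
    doubleFactorial_six_mul_add_one]
  simp only [Nat.cast_mul, doubleFactorial_six_mul_sub_one, Nat.factorial_succ, pow_add]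
  push_cast
  field_simp
  linear_combination 24 * mul_partialSum_three_mul_add_three j d

theorem stmt16_general (g : ℕ) :
    (∀ j : ℕ, 1 ≤ j → j ≤ g →
      lhs16 g (3 * j - 1)
        = (((6 * g - 3 - 2 * (3 * j - 1)).doubleFactorial : ℚ)
            / ((6 * g - 1).doubleFactorial : ℚ)) *
          (((6 * j - 1).doubleFactorial : ℚ) * ((g - 1).factorial : ℚ)
              / ((j.factorial : ℚ) * ((g - j).factorial : ℚ)) * ((g : ℚ) - 2 * j))) ∧
    (∀ j : ℕ, j + 1 ≤ g →
      lhs16 g (3 * j)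
        = (((6 * g - 3 - 2 * (3 * j)).doubleFactorial : ℚ)
            / ((6 * g - 1).doubleFactorial : ℚ)) *
          (-2 * ((6 * j + 1).doubleFactorial : ℚ) * ((g - 1).factorial : ℚ)
              / ((j.factorial : ℚ) * ((g - 1 - j).factorial : ℚ)))) ∧
    (∀ j : ℕ, j + 1 ≤ g →
      lhs16 g (3 * j + 1)
        = (((6 * g - 3 - 2 * (3 * j + 1)).doubleFactorial : ℚ)
            / ((6 * g - 1).doubleFactorial : ℚ)) *
          (2 * ((6 * j + 3).doubleFactorial : ℚ) * ((g - 1).factorial : ℚ)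
              / ((j.factorial : ℚ) * ((g - 1 - j).factorial : ℚ)))) :=
  ⟨fun _ hj hjg => lhs16_three_mul_sub_one hj hjg, fun _ hjg => lhs16_three_mul hjg,
    fun _ hjg => lhs16_three_mul_add_one hjg⟩

/-- the closed-form identity for (24^g g!/(6g-1)!!)·Σ_{l=0}^{k+1} a_{l-1,3g-l},
in the three cases k = 3j-1, k = 3j, k = 3j+1. -/
theorem stmt16 (g : ℕ) (hg : 1 ≤ g) :
    (∀ j : ℕ, 1 ≤ j → j ≤ g →
      lhs16 g (3 * j - 1)
        = (((6 * g - 3 - 2 * (3 * j - 1)).doubleFactorial : ℚ)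
            / ((6 * g - 1).doubleFactorial : ℚ)) *
          (((6 * j - 1).doubleFactorial : ℚ) * ((g - 1).factorial : ℚ)
              / ((j.factorial : ℚ) * ((g - j).factorial : ℚ)) * ((g : ℚ) - 2 * j))) ∧
    (∀ j : ℕ, j + 1 ≤ g →
      lhs16 g (3 * j)
        = (((6 * g - 3 - 2 * (3 * j)).doubleFactorial : ℚ)
            / ((6 * g - 1).doubleFactorial : ℚ)) *
          (-2 * ((6 * j + 1).doubleFactorial : ℚ) * ((g - 1).factorial : ℚ)
              / ((j.factorial : ℚ) * ((g - 1 - j).factorial : ℚ)))) ∧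
    (∀ j : ℕ, j + 1 ≤ g →
      lhs16 g (3 * j + 1)
        = (((6 * g - 3 - 2 * (3 * j + 1)).doubleFactorial : ℚ)
            / ((6 * g - 1).doubleFactorial : ℚ)) *
          (2 * ((6 * j + 3).doubleFactorial : ℚ) * ((g - 1).factorial : ℚ)
              / ((j.factorial : ℚ) * ((g - 1 - j).factorial : ℚ)))) :=
  stmt16_general g
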